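/- Consider the control system ẋ₁ = u(t), ẋ₂ = 4u(t)² − 3u(t)³, ẋ₃ = (x₁ − x₂)², with x₁(0) = x₂(0) = x₃(0) = x₃(1) = 0 and u(t) ∈ U = {−1, 1/3, 1, 3} a.e. on [0,1]. Then every admissible trajectory satisfies u(t) ∈ {1/3, 1} for a.e. t (for any control u realizing it), x₁ = x₂ identically, and x₁(1) ≥ 1/3. Here (x₁,x₂,x₃) is admissible if there exists a measurable u: [0,1] → ℝ with u(t) ∈ U a.e. such that x₁(t) = ∫₀ᵗ u, x₂(t) = ∫₀ᵗ (4u² − 3u³), x₃(t) = ∫₀ᵗ (x₁ − x₂)², and x₃(1) = 0. -/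

import Mathlib

open MeasureTheory Set intervalIntegral Filter Topology

noncomputable section

/-- The control `u` realizes the trajectory `(x₁,x₂,x₃)` of the system of Example 4:
`ẋ₁ = u`, `ẋ₂ = 4u² − 3u³`, `ẋ₃ = (x₁ − x₂)²`, `u(t) ∈ {−1, 1/3, 1, 3}` a.e.,
`x₁(0) = x₂(0) = x₃(0) = x₃(1) = 0`. -/
def RealizesEx4 (u x₁ x₂ x₃ : ℝ → ℝ) : Prop :=
  Measurable u ∧
  (∀ᵐ t ∂(volume.restrict (Icc (0:ℝ) 1)),
    u t ∈ ({-1, 1/3, 1, 3} : Set ℝ)) ∧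
  (∀ t ∈ Icc (0:ℝ) 1, x₁ t = ∫ s in (0:ℝ)..t, u s) ∧
  (∀ t ∈ Icc (0:ℝ) 1, x₂ t = ∫ s in (0:ℝ)..t, (4 * u s ^ 2 - 3 * u s ^ 3)) ∧
  (∀ t ∈ Icc (0:ℝ) 1, x₃ t = ∫ s in (0:ℝ)..t, (x₁ s - x₂ s) ^ 2) ∧
  x₃ 1 = 0

/-! The drift `u - (4u² - 3u³) = u (3u - 1) (u - 1)` of `x₁ - x₂` vanishes on `{−1, 1/3, 1, 3}`
exactly at `1/3` and `1`. Since `x₁ - x₂` is continuous and `x₃(1) = ∫₀¹ (x₁ - x₂)² = 0`, we get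
`x₁ = x₂` on `[0,1]`; so the drift has vanishing primitive, and by the Lebesgue differentiation
theorem it vanishes a.e. Hence `u ∈ {1/3, 1}` a.e. and `x₁(1) = ∫₀¹ u ≥ 1/3`. -/

theorem Integrable.comp_of_ae_mem_isCompact {α β E : Type*} [MeasurableSpace α]
    [TopologicalSpace β] [NormedAddCommGroup E] {μ : Measure α} [IsFiniteMeasure μ]
    {u : α → β} {φ : β → E} {K : Set β} (hφ : Continuous φ) (hu : AEStronglyMeasurable u μ)
    (hK : IsCompact K) (huK : ∀ᵐ t ∂μ, u t ∈ K) :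
    Integrable (fun t => φ (u t)) μ := by
  obtain ⟨C, hC⟩ := hK.exists_bound_of_continuousOn hφ.continuousOn
  refine Integrable.mono' (integrable_const C) (hφ.comp_aestronglyMeasurable hu) ?_
  filter_upwards [huK] with t ht using hC _ ht

theorem ContinuousOn.eqOn_zero_of_integral_eq_zero_of_nonneg {f : ℝ → ℝ} {a b : ℝ}
    (hab : a < b) (hf : ContinuousOn f (Icc a b)) (hf₀ : ∀ x ∈ Icc a b, 0 ≤ f x)
    (h : ∫ x in a..b, f x = 0) : EqOn f 0 (Icc a b) := by
  have hIoc : f =ᵐ[volume.restrict (Ioc a b)] 0 := by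
    refine (integral_eq_zero_iff_of_le_of_nonneg_ae hab.le ?_ ?_).mp h
    · filter_upwards [ae_restrict_mem measurableSet_Ioc] with x hx
      exact hf₀ x (Ioc_subset_Icc_self hx)
    · exact hf.intervalIntegrable_of_Icc hab.le
  rw [Measure.restrict_congr_set Ioc_ae_eq_Icc] at hIoc
  exact Measure.eqOn_Icc_of_ae_eq volume hab.ne hIoc hf continuousOn_const

theorem ae_eq_zero_of_forall_intervalIntegral_eq_zero {E : Type*} [NormedAddCommGroup E]
    [NormedSpace ℝ E] [CompleteSpace E] {f : ℝ → E} {a b : ℝ}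
    (hf : IntervalIntegrable f volume a b) (h : ∀ t ∈ Icc a b, ∫ x in a..t, f x = 0) :
    ∀ᵐ x ∂volume.restrict (Icc a b), f x = 0 := by
  rw [← Measure.restrict_congr_set Ioo_ae_eq_Icc]
  filter_upwards [ae_restrict_of_ae hf.ae_hasDerivAt_integral,
    ae_restrict_mem measurableSet_Ioo] with x hderiv hx
  have hab : a ≤ b := hx.1.le.trans hx.2.le
  have hconst : (fun t => ∫ s in a..t, f s) =ᶠ[𝓝 x] fun _ => 0 :=
    eventually_of_mem (Ioo_mem_nhds hx.1 hx.2) fun t ht => h t (Ioo_subset_Icc_self ht)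
  rw [uIcc_of_le hab] at hderiv
  exact (hderiv (Ioo_subset_Icc_self hx) a (left_mem_Icc.mpr hab)).unique
    ((hasDerivAt_const x 0).congr_of_eventuallyEq hconst)

theorem eq_one_third_or_one_of_sub_cubic_eq_zero {v : ℝ} (hv : v ∈ ({-1, 1/3, 1, 3} : Set ℝ))
    (h : v - (4 * v ^ 2 - 3 * v ^ 3) = 0) : v = 1/3 ∨ v = 1 := by
  rcases hv with rfl | rfl | rfl | rfl <;> norm_num at *

namespace RealizesEx4

variable {u x₁ x₂ x₃ : ℝ → ℝ}

theorem integrableOn_comp (h : RealizesEx4 u x₁ x₂ x₃) {φ : ℝ → ℝ} (hφ : Continuous φ) :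
    IntegrableOn (fun t => φ (u t)) (Icc 0 1) :=
  Integrable.comp_of_ae_mem_isCompact hφ h.1.aestronglyMeasurable (toFinite _).isCompact h.2.1

theorem intervalIntegrable_comp (h : RealizesEx4 u x₁ x₂ x₃) {φ : ℝ → ℝ} (hφ : Continuous φ)
    {t : ℝ} (ht : t ∈ Icc (0:ℝ) 1) : IntervalIntegrable (fun t => φ (u t)) volume 0 t :=
  ((h.integrableOn_comp hφ).mono_set <| by
    rw [uIcc_of_le ht.1]; exact Icc_subset_Icc_right ht.2).intervalIntegrable

theorem sub_eq_integral (h : RealizesEx4 u x₁ x₂ x₃) {t : ℝ} (ht : t ∈ Icc (0:ℝ) 1) :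
    x₁ t - x₂ t = ∫ s in 0..t, (u s - (4 * u s ^ 2 - 3 * u s ^ 3)) := by
  have ⟨_, _, hx₁, hx₂, _⟩ := h
  rw [hx₁ t ht, hx₂ t ht]
  exact (integral_sub (h.intervalIntegrable_comp continuous_id ht)
    (h.intervalIntegrable_comp (φ := fun v => 4 * v ^ 2 - 3 * v ^ 3) (by fun_prop) ht)).symm

theorem continuousOn_sub (h : RealizesEx4 u x₁ x₂ x₃) :
    ContinuousOn (fun t => x₁ t - x₂ t) (Icc 0 1) := by
  have := continuousOn_primitive_interval (a := 0) (b := 1) (μ := volume) <| by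
    rw [uIcc_of_le zero_le_one]
    exact h.integrableOn_comp (φ := fun v => v - (4 * v ^ 2 - 3 * v ^ 3)) (by fun_prop)
  rw [uIcc_of_le zero_le_one] at this
  exact this.congr fun t ht => h.sub_eq_integral ht

end RealizesEx4

/-- **Example 4:** every admissible trajectory of the system satisfies `x₁ = x₂`,
any realizing control takes only the values `1/3` and `1` a.e., and `x₁(1) ≥ 1/3`. -/
theorem example_four
    (u x₁ x₂ x₃ : ℝ → ℝ) (h : RealizesEx4 u x₁ x₂ x₃) :
    (∀ t ∈ Icc (0:ℝ) 1, x₁ t = x₂ t) ∧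
    (∀ᵐ t ∂(volume.restrict (Icc (0:ℝ) 1)), u t = 1/3 ∨ u t = 1) ∧
    1/3 ≤ x₁ 1 := by
  have ⟨_, hU, hx₁, _, hx₃, hx₃₁⟩ := h
  have h₁ : (1:ℝ) ∈ Icc (0:ℝ) 1 := right_mem_Icc.mpr zero_le_one
  have hsq := (h.continuousOn_sub.pow 2).eqOn_zero_of_integral_eq_zero_of_nonneg one_pos
    (fun _ _ => sq_nonneg _) ((hx₃ 1 h₁).symm.trans hx₃₁)
  have heq : ∀ t ∈ Icc (0:ℝ) 1, x₁ t = x₂ t := fun t ht =>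
    sub_eq_zero.mp (pow_eq_zero_iff two_ne_zero |>.mp (hsq ht))
  have hdrift : ∀ᵐ t ∂volume.restrict (Icc (0:ℝ) 1), u t - (4 * u t ^ 2 - 3 * u t ^ 3) = 0 :=
    ae_eq_zero_of_forall_intervalIntegral_eq_zero
      (h.intervalIntegrable_comp (φ := fun v => v - (4 * v ^ 2 - 3 * v ^ 3)) (by fun_prop) h₁)
      fun t ht => by rw [← h.sub_eq_integral ht, heq t ht, sub_self]
  have hu : ∀ᵐ t ∂volume.restrict (Icc (0:ℝ) 1), u t = 1/3 ∨ u t = 1 := by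
    filter_upwards [hU, hdrift] with t htU ht using
      eq_one_third_or_one_of_sub_cubic_eq_zero htU ht
  refine ⟨heq, hu, ?_⟩
  calc (1/3 : ℝ) = ∫ _ in (0:ℝ)..1, (1/3 : ℝ) := by simp
    _ ≤ ∫ s in (0:ℝ)..1, u s := by
      refine integral_mono_ae_restrict zero_le_one intervalIntegrable_const
        (h.intervalIntegrable_comp continuous_id h₁) ?_
      filter_upwards [hu] with t ht
      rcases ht with ht | ht <;> norm_num [ht]
    _ = x₁ 1 := (hx₁ 1 h₁).symm
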